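/- arXiv:math/0605198 — 3 statements merged into one kernel-verified Lean document; each statement's English description precedes it below -/
import Mathlib

section
/- In a model category whose weak equivalences are closed under finite products, if two maps f, g : X → Y are left homotopic via a cylinder object X ⊗ I, then the cocycles (1_X, f) and (1_X, g) from X to Y lie in the same path component of the cocycle category H(X,Y); that is, there exists a cocycle (s, h) with morphisms of cocycles (1_X, f) → (s, h) ← (1_X, g). -/
/-!
STATEMENT 0: In a model category whose weak equivalences are closed under finite products,
if `f, g : X ⟶ Y` are left homotopic via a cylinder object `X ⊗ I` (with structure maps
`d₀ d₁ : X ⟶ X ⊗ I`, `s : X ⊗ I ⟶ X`, `s` a weak equivalence, `dᵢ ≫ s = 𝟙` and homotopy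
`h : X ⊗ I ⟶ Y`, `d₀ ≫ h = f`, `d₁ ≫ h = g`), then there are morphisms of cocycles
`(1_X, f) → (s, h) ← (1_X, g)`, so `(1_X, f)` and `(1_X, g)` lie in the same path
component of the cocycle category `H(X,Y)`.
-/

open CategoryTheory CategoryTheory.Limits

universe v u

/-- A (closed) model structure on a category `M` with all finite limits and colimits. -/
structure ModelStr (M : Type u) [Category.{v} M] : Type (max u v) where
  weq : MorphismProperty M
  fib : MorphismProperty M
  cof : MorphismProperty M
  weq_id : ∀ X : M, weq (𝟙 X)
  /-- CM2, two out of three -/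
  weq_comp : ∀ {X Y Z : M} (f : X ⟶ Y) (g : Y ⟶ Z), weq f → weq g → weq (f ≫ g)
  weq_cancel_left : ∀ {X Y Z : M} (f : X ⟶ Y) (g : Y ⟶ Z), weq f → weq (f ≫ g) → weq g
  weq_cancel_right : ∀ {X Y Z : M} (f : X ⟶ Y) (g : Y ⟶ Z), weq g → weq (f ≫ g) → weq f
  /-- CM3: the three classes are closed under retracts. -/
  retracts : ∀ {X Y X' Y' : M} (f : X ⟶ Y) (g : X' ⟶ Y') (i : X ⟶ X') (r : X' ⟶ X)
    (j : Y ⟶ Y') (s : Y' ⟶ Y), i ≫ r = 𝟙 X → j ≫ s = 𝟙 Y → i ≫ g = f ≫ j → g ≫ s = r ≫ f →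
    (weq g → weq f) ∧ (fib g → fib f) ∧ (cof g → cof f)
  /-- CM4: lifting -/
  lifting : ∀ {A B X Y : M} (i : A ⟶ B) (p : X ⟶ Y) (u : A ⟶ X) (v : B ⟶ Y),
    cof i → fib p → (weq i ∨ weq p) → u ≫ p = i ≫ v →
    ∃ l : B ⟶ X, i ≫ l = u ∧ l ≫ p = v
  /-- CM5: factorizations -/
  fact_cof_triv_fib : ∀ {X Y : M} (f : X ⟶ Y),
    ∃ (Z : M) (i : X ⟶ Z) (q : Z ⟶ Y), cof i ∧ fib q ∧ weq q ∧ i ≫ q = f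
  fact_triv_cof_fib : ∀ {X Y : M} (f : X ⟶ Y),
    ∃ (Z : M) (j : X ⟶ Z) (p : Z ⟶ Y), cof j ∧ weq j ∧ fib p ∧ j ≫ p = f

/-- Right properness: weak equivalences are stable under pullback along fibrations. -/
def ModelStr.RightProper {M : Type u} [Category.{v} M] (S : ModelStr M) : Prop :=
  ∀ {P A B C : M} (fst : P ⟶ A) (snd : P ⟶ B) (f : A ⟶ C) (g : B ⟶ C),
    IsPullback fst snd f g → S.weq f → S.fib g → S.weq snd

/-- The weak equivalences are closed under finite products: `f × 1` and `1 × f` are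
weak equivalences whenever `f` is. -/
def ModelStr.WeqClosedUnderProducts {M : Type u} [Category.{v} M] [HasBinaryProducts M]
    (S : ModelStr M) : Prop :=
  ∀ {A B : M} (f : A ⟶ B) (Z : M), S.weq f →
    S.weq (Limits.prod.map f (𝟙 Z)) ∧ S.weq (Limits.prod.map (𝟙 Z) f)

/-- A cocycle from `X` to `Y`: a pair of maps `X ⟵ Z ⟶ Y` whose first leg is a weak
equivalence. -/
structure Cocycle {M : Type u} [Category.{v} M] (W : MorphismProperty M) (X Y : M) :
    Type (max u v) where
  Z : M
  f : Z ⟶ X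
  g : Z ⟶ Y
  hf : W f

/-- A morphism of cocycles `(f,g) → (f',g')` is a map of the middle objects commuting with
both legs.  Path components of the cocycle category are the quotient by the equivalence
relation generated by this relation. -/
def cocycleRel {M : Type u} [Category.{v} M] (W : MorphismProperty M) (X Y : M)
    (c c' : Cocycle W X Y) : Prop :=
  ∃ α : c.Z ⟶ c'.Z, α ≫ c'.f = c.f ∧ α ≫ c'.g = c.g

/-- `π₀H(X,Y)`, the path components of the cocycle category. -/
def pi0H {M : Type u} [Category.{v} M] (W : MorphismProperty M) (X Y : M) :=
  Quot (cocycleRel W X Y)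

theorem left_homotopic_cocycles_same_component {M : Type u} [Category.{v} M]
    [HasFiniteLimits M] [HasFiniteColimits M]
    (S : ModelStr M) (hprod : S.WeqClosedUnderProducts)
    {X Y : M} (f g : X ⟶ Y)
    (C : M) (d₀ d₁ : X ⟶ C) (s : C ⟶ X) (hs : S.weq s)
    (hd₀ : d₀ ≫ s = 𝟙 X) (hd₁ : d₁ ≫ s = 𝟙 X)
    (h : C ⟶ Y) (hhf : d₀ ≫ h = f) (hhg : d₁ ≫ h = g) :
    (∃ α : X ⟶ C, α ≫ s = 𝟙 X ∧ α ≫ h = f) ∧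
    (∃ β : X ⟶ C, β ≫ s = 𝟙 X ∧ β ≫ h = g) ∧
    Quot.mk (cocycleRel S.weq X Y) ⟨X, 𝟙 X, f, S.weq_id X⟩ =
      Quot.mk (cocycleRel S.weq X Y) ⟨X, 𝟙 X, g, S.weq_id X⟩ := by
  refine ⟨⟨d₀, hd₀, hhf⟩, ⟨d₁, hd₁, hhg⟩, ?_⟩
  have h1 : Quot.mk (cocycleRel S.weq X Y) ⟨X, 𝟙 X, f, S.weq_id X⟩ =
      Quot.mk (cocycleRel S.weq X Y) ⟨C, s, h, hs⟩ :=
    Quot.sound ⟨d₀, hd₀, hhf⟩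
  have h2 : Quot.mk (cocycleRel S.weq X Y) ⟨X, 𝟙 X, g, S.weq_id X⟩ =
      Quot.mk (cocycleRel S.weq X Y) ⟨C, s, h, hs⟩ :=
    Quot.sound ⟨d₁, hd₁, hhg⟩
  rw [h1, h2]
end

section
/- In a right proper model category whose weak equivalences are closed under finite products, if α : X → X' and β : Y → Y' are weak equivalences, then the induced function π₀H(X,Y) → π₀H(X',Y') on path components of cocycle categories, given by postcomposition with α and β, is a bijection. -/
/-!
STATEMENT 1: In a right proper model category whose weak equivalences are closed under
finite products, if `α : X ⟶ X'` and `β : Y ⟶ Y'` are weak equivalences, then the induced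
function `π₀H(X,Y) → π₀H(X',Y')` given by postcomposition of the two legs of a cocycle
with `α` and `β` is a bijection.
-/

open CategoryTheory CategoryTheory.Limits

universe v u

/-- The function `π₀H(X,Y) → π₀H(X',Y')` induced by weak equivalences `α : X ⟶ X'`,
`β : Y ⟶ Y'` (postcomposition of both legs of a cocycle). -/
def pushCocycle {M : Type u} [Category.{v} M] (S : ModelStr M)
    {X X' Y Y' : M} (α : X ⟶ X') (β : Y ⟶ Y') (hα : S.weq α) :
    pi0H S.weq X Y → pi0H S.weq X' Y' :=
  Quot.lift
    (fun c => Quot.mk _ ⟨c.Z, c.f ≫ α, c.g ≫ β, S.weq_comp c.f α c.hf hα⟩)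
    (by
      rintro c c' ⟨a, h1, h2⟩
      exact Quot.sound ⟨a, by rw [← Category.assoc, h1], by rw [← Category.assoc, h2]⟩)

/-!
An inverse is built by pulling back along `α × β`. A cocycle `X' ⟵ Z ⟶ Y'` is first replaced,
through a morphism of cocycles, by one whose pairing `W ⟶ X' ⨯ Y'` is a fibration: factor
`(f, g)` as a trivial cofibration followed by a fibration. Pulling that fibration back along the
weak equivalence `α × β` gives a cocycle `X ⟵ P ⟶ Y`; its first leg is a weak equivalence by
right properness and two out of three. Morphisms of cocycles lift through the replacement by the
lifting axiom, so this is well defined on path components, and the pullback square together with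
its universal property gives the two inverse identities.
-/

open MorphismProperty

namespace ModelStr

variable {M : Type u} [Category.{v} M] (S : ModelStr M)

lemma weq_prodMap [HasBinaryProducts M] (hprod : S.WeqClosedUnderProducts)
    {X X' Y Y' : M} {α : X ⟶ X'} {β : Y ⟶ Y'} (hα : S.weq α) (hβ : S.weq β) :
    S.weq (prod.map α β) := by
  simpa using S.weq_comp _ _ (hprod α Y hα).1 (hprod β X' hβ).2

noncomputable def trivCofFibFactorization {A B : M} (φ : A ⟶ B) :
    MapFactorizationData (S.cof ⊓ S.weq) S.fib φ :=
  Nonempty.some <|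
    let ⟨Z, i, p, hcof, hweq, hp, fac⟩ := S.fact_triv_cof_fib φ
    ⟨{ Z, i, p, fac, hi := ⟨hcof, hweq⟩, hp }⟩

end ModelStr

namespace Cocycle

variable {M : Type u} [Category.{v} M] {S : ModelStr M}

abbrev push {X X' Y Y' : M} (c : Cocycle S.weq X Y) (α : X ⟶ X') (β : Y ⟶ Y') (hα : S.weq α) :
    Cocycle S.weq X' Y' :=
  ⟨c.Z, c.f ≫ α, c.g ≫ β, S.weq_comp c.f α c.hf hα⟩

section FibrantReplacement

variable [HasBinaryProducts M] {X Y : M} {c d : Cocycle S.weq X Y}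

noncomputable def ofFactorization
    (F : MapFactorizationData (S.cof ⊓ S.weq) S.fib (prod.lift c.f c.g)) : Cocycle S.weq X Y where
  Z := F.Z
  f := F.p ≫ prod.fst
  g := F.p ≫ prod.snd
  hf := S.weq_cancel_left F.i _ F.hi.2 (by simpa [prod.lift_fst] using c.hf)

lemma lift_ofFactorization
    (F : MapFactorizationData (S.cof ⊓ S.weq) S.fib (prod.lift c.f c.g)) :
    prod.lift (ofFactorization F).f (ofFactorization F).g = F.p := by
  ext <;> simp [ofFactorization, prod.lift_fst, prod.lift_snd]

lemma cocycleRel_self_ofFactorization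
    (F : MapFactorizationData (S.cof ⊓ S.weq) S.fib (prod.lift c.f c.g)) :
    cocycleRel S.weq X Y c (ofFactorization F) :=
  ⟨F.i, by simp [ofFactorization, prod.lift_fst], by simp [ofFactorization, prod.lift_snd]⟩

lemma cocycleRel_ofFactorization (h : cocycleRel S.weq X Y c d)
    (F : MapFactorizationData (S.cof ⊓ S.weq) S.fib (prod.lift c.f c.g))
    (G : MapFactorizationData (S.cof ⊓ S.weq) S.fib (prod.lift d.f d.g)) :
    cocycleRel S.weq X Y (ofFactorization F) (ofFactorization G) := by
  obtain ⟨θ, hθf, hθg⟩ := h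
  obtain ⟨L, -, hL⟩ := S.lifting F.i G.p (θ ≫ G.i) F.p F.hi.1 G.hp (Or.inl F.hi.2)
    (by simp [hθf, hθg])
  exact ⟨L, by simp [ofFactorization, reassoc_of% hL], by simp [ofFactorization, reassoc_of% hL]⟩

noncomputable def fibrantReplacement (c : Cocycle S.weq X Y) : Cocycle S.weq X Y :=
  ofFactorization (S.trivCofFibFactorization (prod.lift c.f c.g))

lemma fib_lift_fibrantReplacement (c : Cocycle S.weq X Y) :
    S.fib (prod.lift c.fibrantReplacement.f c.fibrantReplacement.g) := by
  rw [fibrantReplacement, lift_ofFactorization]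
  exact (S.trivCofFibFactorization _).hp

end FibrantReplacement

section Pullback

variable [HasBinaryProducts M] [HasPullbacks M] {X X' Y Y' : M} {α : X ⟶ X'} {β : Y ⟶ Y'}

lemma pullback_fst_prod_fst_comp {W : M} (φ : W ⟶ X' ⨯ Y') :
    pullback.fst (prod.map α β) φ ≫ prod.fst ≫ α = pullback.snd _ _ ≫ φ ≫ prod.fst := by
  rw [← prod.map_fst α β, pullback.condition_assoc]

lemma pullback_fst_prod_snd_comp {W : M} (φ : W ⟶ X' ⨯ Y') :
    pullback.fst (prod.map α β) φ ≫ prod.snd ≫ β = pullback.snd _ _ ≫ φ ≫ prod.snd := by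
  rw [← prod.map_snd α β, pullback.condition_assoc]

lemma weq_pullback_fst_comp_fst (hproper : S.RightProper) (hα : S.weq α)
    (hαβ : S.weq (prod.map α β)) (c : Cocycle S.weq X' Y') (hc : S.fib (prod.lift c.f c.g)) :
    S.weq (pullback.fst (prod.map α β) (prod.lift c.f c.g) ≫ prod.fst) := by
  refine S.weq_cancel_right _ α hα ?_
  rw [Category.assoc, pullback_fst_prod_fst_comp, prod.lift_fst]
  exact S.weq_comp _ _ (hproper _ _ _ _ (IsPullback.of_hasPullback _ _) hαβ hc) c.hf

/- `@hproper` rather than `hproper`: otherwise Lean eta-expands it over the implicit binders of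
`RightProper`, and the resulting terms no longer typecheck up to reducible unfolding, which
breaks `rw` and `simp` below. -/
noncomputable abbrev pull (hproper : S.RightProper) (hα : S.weq α)
    (hαβ : S.weq (prod.map α β)) (c : Cocycle S.weq X' Y') (hc : S.fib (prod.lift c.f c.g)) :
    Cocycle S.weq X Y where
  Z := Limits.pullback (prod.map α β) (prod.lift c.f c.g)
  f := pullback.fst _ _ ≫ prod.fst
  g := pullback.fst _ _ ≫ prod.snd
  hf := weq_pullback_fst_comp_fst @hproper hα hαβ c hc

variable (hproper : S.RightProper) (hα : S.weq α) (hαβ : S.weq (prod.map α β))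
  {c d : Cocycle S.weq X' Y'} (hc : S.fib (prod.lift c.f c.g)) (hd : S.fib (prod.lift d.f d.g))

lemma cocycleRel_push_pull :
    cocycleRel S.weq X' Y' ((c.pull @hproper hα hαβ hc).push α β hα) c :=
  ⟨pullback.snd _ _,
    by simp [push, pull, pullback_fst_prod_fst_comp, prod.lift_fst],
    by simp [push, pull, pullback_fst_prod_snd_comp, prod.lift_snd]⟩

lemma cocycleRel_pull (h : cocycleRel S.weq X' Y' c d) :
    cocycleRel S.weq X Y (c.pull @hproper hα hαβ hc) (d.pull @hproper hα hαβ hd) := by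
  obtain ⟨θ, hθf, hθg⟩ := h
  have hθ : pullback.fst (prod.map α β) (prod.lift c.f c.g) ≫ prod.map α β =
      (pullback.snd _ _ ≫ θ) ≫ prod.lift d.f d.g := by
    rw [Category.assoc, prod.comp_lift, hθf, hθg, pullback.condition]
  exact ⟨pullback.lift _ _ hθ, by simp [pullback.lift_fst_assoc],
    by simp [pullback.lift_fst_assoc]⟩

lemma cocycleRel_pull_of_push {e : Cocycle S.weq X Y}
    (h : cocycleRel S.weq X' Y' (e.push α β hα) d) :
    cocycleRel S.weq X Y e (d.pull @hproper hα hαβ hd) := by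
  obtain ⟨θ, hθf, hθg⟩ := h
  have hθ : prod.lift e.f e.g ≫ prod.map α β = θ ≫ prod.lift d.f d.g := by
    rw [prod.lift_map, prod.comp_lift, hθf, hθg]
  exact ⟨pullback.lift _ _ hθ, by simp [pullback.lift_fst_assoc, prod.lift_fst],
    by simp [pullback.lift_fst_assoc, prod.lift_snd]⟩

end Pullback

end Cocycle

section Inverse

open Cocycle

variable {M : Type u} [Category.{v} M] [HasBinaryProducts M] [HasPullbacks M] {S : ModelStr M}
  {X X' Y Y' : M} {α : X ⟶ X'} {β : Y ⟶ Y'}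
  (hproper : S.RightProper) (hα : S.weq α) (hαβ : S.weq (prod.map α β))

noncomputable def pullCocycle : pi0H S.weq X' Y' → pi0H S.weq X Y :=
  Quot.lift
    (fun c => Quot.mk _ (c.fibrantReplacement.pull @hproper hα hαβ c.fib_lift_fibrantReplacement))
    fun _ _ h => Quot.sound <| cocycleRel_pull @hproper hα hαβ _ _ <|
      cocycleRel_ofFactorization h _ _

lemma pullCocycle_pushCocycle :
    Function.LeftInverse (pullCocycle @hproper hα hαβ) (pushCocycle S α β hα) :=
  Quot.ind fun _ => .symm <| Quot.sound <|
    cocycleRel_pull_of_push @hproper hα hαβ _ (cocycleRel_self_ofFactorization _)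

lemma pushCocycle_pullCocycle :
    Function.RightInverse (pullCocycle @hproper hα hαβ) (pushCocycle S α β hα) :=
  Quot.ind fun _ => (Quot.sound (cocycleRel_push_pull @hproper hα hαβ _)).trans
    (Quot.sound (cocycleRel_self_ofFactorization _)).symm

end Inverse

theorem pushCocycle_bijective_general {M : Type u} [Category.{v} M]
    [HasFiniteLimits M]
    (S : ModelStr M) (hproper : S.RightProper) (hprod : S.WeqClosedUnderProducts)
    {X X' Y Y' : M} (α : X ⟶ X') (β : Y ⟶ Y') (hα : S.weq α) (hβ : S.weq β) :
    Function.Bijective (pushCocycle S α β hα) :=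
  have hαβ := S.weq_prodMap hprod hα hβ
  Function.bijective_iff_has_inverse.2 ⟨pullCocycle @hproper hα hαβ,
    pullCocycle_pushCocycle @hproper hα hαβ, pushCocycle_pullCocycle @hproper hα hαβ⟩

theorem pushCocycle_bijective {M : Type u} [Category.{v} M]
    [HasFiniteLimits M] [HasFiniteColimits M]
    (S : ModelStr M) (hproper : S.RightProper) (hprod : S.WeqClosedUnderProducts)
    {X X' Y Y' : M} (α : X ⟶ X') (β : Y ⟶ Y') (hα : S.weq α) (hβ : S.weq β) :
    Function.Bijective (pushCocycle S α β hα) :=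
  pushCocycle_bijective_general S hproper hprod α β hα hβ
end

section
/- In a right proper model category with weak equivalences closed under finite products, if X is cofibrant and Y is fibrant then the canonical function φ : π₀H(X,Y) → [X,Y], sending a cocycle (f,g) to g∘f⁻¹ in the homotopy category, is a bijection. -/
/-!
Fix `X`. For a weak equivalence `w : A ⟶ B`, composition with `w` is a bijection
`π₀H(X,A) → π₀H(X,B)`: its inverse factors `(f,g) : Z ⟶ X ⨯ B` as a trivial cofibration followed
by a fibration `q : Z' ⟶ X ⨯ B` and pulls `q` back along `𝟙 × w`. Since `𝟙 × w` is a weak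
equivalence, right properness makes the result a cocycle again, and the lifting axiom makes the
construction respect morphisms of cocycles. Hence `A ↦ π₀H(X,A)` factors through the homotopy
category, and `u ↦ u_*[𝟙, 𝟙]` is inverse to `φ`: one composite is the identity by naturality of
`φ`, the other because `(g ∘ f⁻¹)_*[𝟙, 𝟙] = [f, g]`.
-/

open CategoryTheory CategoryTheory.Limits

universe v u

open Function

section

variable {M : Type u} [Category.{v} M] {W : MorphismProperty M} {X A B C : M}

-- Reducible, so that `(c.map w).Z` unfolds to `c.Z` when `simp` matches morphisms out of it.
abbrev Cocycle.map (w : A ⟶ B) (c : Cocycle W X A) : Cocycle W X B :=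
  ⟨c.Z, c.f, c.g ≫ w, c.hf⟩

theorem cocycleRel.map (w : A ⟶ B) {c c' : Cocycle W X A} (h : cocycleRel W X A c c') :
    cocycleRel W X B (c.map w) (c'.map w) := by
  obtain ⟨α, hf, hg⟩ := h
  exact ⟨α, hf, by simp [← hg]⟩

def pi0H.map (w : A ⟶ B) : pi0H W X A → pi0H W X B :=
  Quot.map (Cocycle.map w) fun _ _ => cocycleRel.map w

theorem pi0H.map_id (x : pi0H W X A) : pi0H.map (𝟙 A) x = x := by
  obtain ⟨c⟩ := x
  exact Quot.sound ⟨𝟙 c.Z, by simp, by simp⟩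

theorem pi0H.map_comp (w : A ⟶ B) (w' : B ⟶ C) (x : pi0H W X A) :
    pi0H.map (w ≫ w') x = pi0H.map w' (pi0H.map w x) := by
  obtain ⟨c⟩ := x
  exact Quot.sound ⟨𝟙 c.Z, by simp, by simp⟩

variable (W X) in
def pi0HFunctor : M ⥤ Type (max u v) where
  obj A := pi0H W X A
  map w := TypeCat.ofHom (pi0H.map w)
  map_id _ := by ext; exact pi0H.map_id _
  map_comp _ _ := by ext; exact pi0H.map_comp _ _ _

noncomputable def Cocycle.toLocalization (c : Cocycle W X A) : W.Q.obj X ⟶ W.Q.obj A :=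
  have := W.Q_inverts c.f c.hf
  inv (W.Q.map c.f) ≫ W.Q.map c.g

theorem cocycleRel.toLocalization_eq {c c' : Cocycle W X A} (h : cocycleRel W X A c c') :
    c.toLocalization = c'.toLocalization := by
  obtain ⟨α, hf, hg⟩ := h
  have := W.Q_inverts c.f c.hf
  have := W.Q_inverts c'.f c'.hf
  simp only [Cocycle.toLocalization, IsIso.inv_comp_eq, ← hf, ← hg, Functor.map_comp]
  simp

theorem Cocycle.toLocalization_map (w : A ⟶ B) (c : Cocycle W X A) :
    (c.map w).toLocalization = c.toLocalization ≫ W.Q.map w := by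
  simp [Cocycle.toLocalization]

variable (X A) in
noncomputable def pi0H.toLocalization : pi0H W X A → (W.Q.obj X ⟶ W.Q.obj A) :=
  Quot.lift Cocycle.toLocalization fun _ _ => cocycleRel.toLocalization_eq

theorem pi0H.toLocalization_mk (c : Cocycle W X A) :
    pi0H.toLocalization X A (Quot.mk _ c) = c.toLocalization := rfl

end

section Localization

open Localization

variable {M : Type u} [Category.{v} M] {W : MorphismProperty M} {X Y : M}

variable (W X) in
def pi0H.id [W.ContainsIdentities] : pi0H W X X :=
  Quot.mk _ ⟨X, 𝟙 X, 𝟙 X, W.id_mem X⟩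

theorem pi0H.toLocalization_id [W.ContainsIdentities] :
    pi0H.toLocalization X X (pi0H.id W X) = 𝟙 (W.Q.obj X) := by
  simp [pi0H.id, pi0H.toLocalization_mk, Cocycle.toLocalization]

theorem pi0HFunctor_lift_map_toLocalization [W.ContainsIdentities]
    (hW : W.IsInvertedBy (pi0HFunctor W X)) (c : Cocycle W X Y) :
    (Construction.lift _ hW).map c.toLocalization (pi0H.id W X) =
      (Quot.mk _ c : pi0H W X Y) := by
  set G := Construction.lift _ hW
  have := W.Q_inverts c.f c.hf
  -- `f_*[f, 𝟙] = [f, f] = [𝟙, 𝟙]`, so `(Q f)⁻¹` sends `[𝟙, 𝟙]` to `[f, 𝟙]`. The steps are terms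
  -- because `rw` does not see through `G.obj (W.Q.obj Y) = pi0H W X Y`.
  let y : G.obj (W.Q.obj c.Z) := (Quot.mk _ ⟨c.Z, c.f, 𝟙 c.Z, c.hf⟩ : pi0H W X c.Z)
  have hy : G.map (W.Q.map c.f) y = pi0H.id W X :=
    Quot.sound ⟨c.f, Category.comp_id _, (Category.comp_id _).trans (Category.id_comp _).symm⟩
  have hinv : G.map (inv (W.Q.map c.f)) (pi0H.id W X) = y :=
    (congrArg _ hy.symm).trans (G.map_hom_inv_apply (W.Q.map c.f) y)
  exact (G.map_comp_apply _ _ _).trans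
    ((congrArg _ hinv).trans (Quot.sound ⟨𝟙 c.Z, Category.id_comp _, rfl⟩))

variable (W X) in
noncomputable def pi0H.toLocalizationNatTrans (hW : W.IsInvertedBy (pi0HFunctor W X)) :
    Construction.lift _ hW ⟶ coyoneda.obj (Opposite.op (W.Q.obj X)) :=
  Construction.natTransExtension
    { app A := TypeCat.ofHom (pi0H.toLocalization X A)
      naturality A B w := by
        ext ⟨c⟩
        exact Cocycle.toLocalization_map w c }

theorem pi0H.toLocalization_pi0HFunctor_lift_map [W.ContainsIdentities]
    (hW : W.IsInvertedBy (pi0HFunctor W X)) (u : W.Q.obj X ⟶ W.Q.obj Y) :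
    pi0H.toLocalization X Y ((Construction.lift _ hW).map u (pi0H.id W X)) = u := by
  have h : pi0H.toLocalization X Y ((Construction.lift _ hW).map u (pi0H.id W X)) =
      pi0H.toLocalization X X (pi0H.id W X) ≫ u :=
    ConcreteCategory.congr_hom ((pi0H.toLocalizationNatTrans W X hW).naturality u) _
  rwa [pi0H.toLocalization_id, Category.id_comp] at h

theorem pi0H.toLocalization_bijective [W.ContainsIdentities]
    (hW : W.IsInvertedBy (pi0HFunctor W X)) (Y : M) :
    Bijective (pi0H.toLocalization (W := W) X Y) := by
  refine bijective_iff_has_inverse.2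
    ⟨fun u => (Construction.lift _ hW).map u (pi0H.id W X), ?_,
      pi0H.toLocalization_pi0HFunctor_lift_map hW⟩
  rintro ⟨c⟩
  exact pi0HFunctor_lift_map_toLocalization hW c

end Localization

namespace ModelStr

variable {M : Type u} [Category.{v} M] (S : ModelStr M)

noncomputable def factorizationData {A B : M} (f : A ⟶ B) :
    (S.cof ⊓ S.weq).MapFactorizationData S.fib f :=
  have h := S.fact_triv_cof_fib f
  { Z := h.choose
    i := h.choose_spec.choose
    p := h.choose_spec.choose_spec.choose
    fac := h.choose_spec.choose_spec.choose_spec.2.2.2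
    hi := ⟨h.choose_spec.choose_spec.choose_spec.1, h.choose_spec.choose_spec.choose_spec.2.1⟩
    hp := h.choose_spec.choose_spec.choose_spec.2.2.1 }

variable [HasBinaryProducts M] {X A B : M}

abbrev CocycleFactorization (d : Cocycle S.weq X B) :=
  (S.cof ⊓ S.weq).MapFactorizationData S.fib (prod.lift d.f d.g)

namespace CocycleFactorization

variable {S} {d : Cocycle S.weq X B} (F : S.CocycleFactorization d)

theorem weq_p_fst : S.weq (F.p ≫ prod.fst) :=
  S.weq_cancel_left F.i _ F.hi.2 (by rw [F.fac_assoc, prod.lift_fst]; exact d.hf)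

noncomputable def cocycle : Cocycle S.weq X B :=
  ⟨F.Z, F.p ≫ prod.fst, F.p ≫ prod.snd, F.weq_p_fst⟩

theorem cocycleRel_cocycle : cocycleRel S.weq X B d F.cocycle :=
  ⟨F.i, by simp [cocycle, prod.lift_fst], by simp [cocycle, prod.lift_snd]⟩

variable [HasPullbacks M] (hproper : S.RightProper) (hprod : S.WeqClosedUnderProducts)
  {w : A ⟶ B} (hw : S.weq w)

noncomputable def pullbackCocycle : Cocycle S.weq X A where
  Z := pullback F.p (prod.map (𝟙 X) w)
  f := pullback.snd _ _ ≫ prod.fst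
  g := pullback.snd _ _ ≫ prod.snd
  hf := by
    have hfst : S.weq (pullback.fst F.p (prod.map (𝟙 X) w)) :=
      hproper _ _ _ _ (IsPullback.of_hasPullback _ _).flip (hprod w X hw).2 F.hp
    have hcomm : pullback.snd F.p (prod.map (𝟙 X) w) ≫ prod.fst =
        pullback.fst _ _ ≫ F.p ≫ prod.fst := by
      simp [pullback.condition_assoc]
    rw [hcomm]
    exact S.weq_comp _ _ hfst F.weq_p_fst

theorem cocycleRel_map_pullbackCocycle :
    cocycleRel S.weq X B ((F.pullbackCocycle hproper hprod hw).map w) F.cocycle :=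
  ⟨pullback.fst _ _, by simp [pullbackCocycle, cocycle, pullback.condition_assoc],
    by simp [pullbackCocycle, cocycle, pullback.condition_assoc]⟩

theorem cocycleRel_pullbackCocycle_of_map_eq {c : Cocycle S.weq X A} (hc : c.map w = d) :
    cocycleRel S.weq X A c (F.pullbackCocycle hproper hprod hw) := by
  subst hc
  have hcomm : F.i ≫ F.p = prod.lift c.f c.g ≫ prod.map (𝟙 X) w := by
    simp [F.fac, prod.lift_map]
  refine ⟨pullback.lift F.i (prod.lift c.f c.g) hcomm, ?_, ?_⟩
  · simp only [pullbackCocycle, pullback.lift_snd_assoc, prod.lift_fst]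
  · simp only [pullbackCocycle, pullback.lift_snd_assoc, prod.lift_snd]

theorem cocycleRel_pullbackCocycle {d' : Cocycle S.weq X B} (F' : S.CocycleFactorization d')
    (h : cocycleRel S.weq X B d d') :
    cocycleRel S.weq X A (F.pullbackCocycle hproper hprod hw)
      (F'.pullbackCocycle hproper hprod hw) := by
  obtain ⟨α, hf, hg⟩ := h
  have hsq : (α ≫ F'.i) ≫ F'.p = F.i ≫ F.p := by
    apply prod.hom_ext <;> simp [hf, hg, prod.lift_fst, prod.lift_snd]
  obtain ⟨l, -, hlp⟩ := S.lifting F.i F'.p (α ≫ F'.i) F.p F.hi.1 F'.hp (Or.inl F.hi.2) hsq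
  have hcomm : (pullback.fst _ _ ≫ l) ≫ F'.p =
      pullback.snd F.p (prod.map (𝟙 X) w) ≫ prod.map (𝟙 X) w := by
    rw [Category.assoc, hlp, pullback.condition]
  exact ⟨pullback.lift _ _ hcomm, pullback.lift_snd_assoc _ _ _ _,
    pullback.lift_snd_assoc _ _ _ _⟩

end CocycleFactorization

variable [HasPullbacks M]

theorem pi0H_map_bijective (hproper : S.RightProper) (hprod : S.WeqClosedUnderProducts)
    {w : A ⟶ B} (hw : S.weq w) : Bijective (pi0H.map (W := S.weq) (X := X) w) := by
  let F (d : Cocycle S.weq X B) : S.CocycleFactorization d := S.factorizationData _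
  let inverse : pi0H S.weq X B → pi0H S.weq X A :=
    Quot.lift (fun d => Quot.mk _ ((F d).pullbackCocycle hproper hprod hw))
      fun d d' h => Quot.sound ((F d).cocycleRel_pullbackCocycle hproper hprod hw (F d') h)
  refine bijective_iff_has_inverse.2 ⟨inverse, ?_, ?_⟩
  · rintro ⟨c⟩
    exact (Quot.sound ((F _).cocycleRel_pullbackCocycle_of_map_eq hproper hprod hw rfl)).symm
  · rintro ⟨d⟩
    exact (Quot.sound ((F d).cocycleRel_map_pullbackCocycle hproper hprod hw)).trans
      (Quot.sound (F d).cocycleRel_cocycle).symm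

theorem isInvertedBy_pi0HFunctor (hproper : S.RightProper) (hprod : S.WeqClosedUnderProducts)
    (X : M) : S.weq.IsInvertedBy (pi0HFunctor S.weq X) :=
  fun _ _ _ hw => (isIso_iff_bijective _).2 (S.pi0H_map_bijective hproper hprod hw)

end ModelStr

theorem cocycle_pi0_bijection_of_cofibrant_fibrant_general {M : Type u} [Category.{v} M]
    [HasFiniteLimits M]
    (S : ModelStr M) (hproper : S.RightProper) (hprod : S.WeqClosedUnderProducts)
    (X Y : M)
    :
    ∃ φ : pi0H S.weq X Y → (S.weq.Q.obj X ⟶ S.weq.Q.obj Y),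
      (∀ c : Cocycle S.weq X Y,
        φ (Quot.mk _ c) =
          (haveI : IsIso (S.weq.Q.map c.f) := S.weq.Q_inverts c.f c.hf
           inv (S.weq.Q.map c.f)) ≫ S.weq.Q.map c.g) ∧
      Function.Bijective φ := by
  have : S.weq.ContainsIdentities := ⟨S.weq_id⟩
  exact ⟨pi0H.toLocalization X Y, fun _ => rfl,
    pi0H.toLocalization_bijective (S.isInvertedBy_pi0HFunctor hproper hprod X) Y⟩

theorem cocycle_pi0_bijection_of_cofibrant_fibrant {M : Type u} [Category.{v} M]
    [HasFiniteLimits M] [HasFiniteColimits M]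
    (S : ModelStr M) (hproper : S.RightProper) (hprod : S.WeqClosedUnderProducts)
    (X Y : M)
    (hX : S.cof (Limits.initial.to X))   -- `X` is cofibrant
    (hY : S.fib (Limits.terminal.from Y))  -- `Y` is fibrant
    :
    ∃ φ : pi0H S.weq X Y → (S.weq.Q.obj X ⟶ S.weq.Q.obj Y),
      (∀ c : Cocycle S.weq X Y,
        φ (Quot.mk _ c) =
          (haveI : IsIso (S.weq.Q.map c.f) := S.weq.Q_inverts c.f c.hf
           inv (S.weq.Q.map c.f)) ≫ S.weq.Q.map c.g) ∧
      Function.Bijective φ :=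
  cocycle_pi0_bijection_of_cofibrant_fibrant_general S hproper hprod X Y
end
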